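/- Let φ, f be analytic on the disc and let the Liouville weighted composition operator A_{f,φ} g = f · (g∘φ)′ = f·φ′·(g′∘φ) be densely defined on H². If γ : [0,T] → 𝔻 is a C¹ trajectory with γ̇ = f(γ) and φ∘γ remains in 𝔻, then the occupation kernel Γ_γ lies in the domain of A_{f,φ}* and A_{f,φ}* Γ_γ = K_{φ(γ(T))} − K_{φ(γ(0))}. -/

import Mathlib

open Metric ComplexConjugate

noncomputable abbrev H2 : Type := lp (fun _ : ℕ => ℂ) 2

noncomputable def hardyEval (h : H2) (z : ℂ) : ℂ := ∑' n : ℕ, h n * z ^ n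

/-!
Along the trajectory, the chain rule and `γ̇ = f ∘ γ` give
`(A_{f,φ} g)(γ t) = (d/dt) g (φ (γ t))`, so pairing `A_{f,φ} g` with `Γ_γ` is, by the
fundamental theorem of calculus, `g (φ (γ T)) - g (φ (γ 0))`. By the reproducing property of the
Szegő kernel this is the pairing of `g` with `K_{φ(γ(T))} - K_{φ(γ(0))}`, whose coefficient
sequence `conj w ^ n` is square summable because `φ ∘ γ` stays in the disc.
-/

open FormalMultilinearSeries

namespace H2

lemma summable_mul_pow (g : H2) {z : ℂ} (hz : ‖z‖ < 1) :
    Summable fun n : ℕ => g n * z ^ n := by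
  refine Summable.of_norm_bounded
    ((summable_geometric_of_lt_one (norm_nonneg z) hz).mul_left ‖g‖) fun n => ?_
  rw [norm_mul, norm_pow]
  gcongr
  exact lp.norm_apply_le_norm two_ne_zero g n

lemma one_le_radius_ofScalars (g : H2) : 1 ≤ (ofScalars ℂ g).radius := by
  refine le_radius_of_bound _ ‖g‖ fun n => ?_
  simpa [ofScalars_norm] using lp.norm_apply_le_norm two_ne_zero g n

end H2

lemma memℓp_two_pow {a : ℂ} (ha : ‖a‖ < 1) : Memℓp (fun n : ℕ => a ^ n) 2 := by
  refine memℓp_gen ?_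
  simpa [norm_pow, ← pow_mul, mul_comm] using
    summable_geometric_of_lt_one (by positivity) (pow_lt_one₀ (norm_nonneg a) ha two_ne_zero)

lemma hardyEval_eq_ofScalarsSum (g : H2) : hardyEval g = ofScalarsSum (E := ℂ) g := by
  ext z
  simp [hardyEval, ofScalarsSum_eq_tsum, mul_comm]

lemma analyticOnNhd_hardyEval (g : H2) : AnalyticOnNhd ℂ (hardyEval g) (ball 0 1) := by
  rw [hardyEval_eq_ofScalarsSum]
  refine (ofScalars ℂ g).analyticOnNhd.mono ?_
  rw [← NNReal.coe_one, ← eball_coe]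
  exact eball_subset_eball (by simpa using g.one_le_radius_ofScalars)

lemma hardyEval_sub_hardyEval_eq_tsum (g : H2) {a b : ℂ} (ha : ‖a‖ < 1) (hb : ‖b‖ < 1) :
    hardyEval g a - hardyEval g b = ∑' n : ℕ, g n * conj (conj a ^ n - conj b ^ n) := by
  simp only [map_sub, map_pow, Complex.conj_conj, mul_sub]
  exact ((g.summable_mul_pow ha).tsum_sub (g.summable_mul_pow hb)).symm

lemma hasDerivAt_hardyEval_comp (g : H2) {φ : ℂ → ℂ} {γ : ℝ → ℂ} {v : ℂ} {t : ℝ}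
    (hγ : HasDerivAt γ v t) (hφ : DifferentiableAt ℂ φ (γ t)) (hφγ : φ (γ t) ∈ ball 0 1) :
    HasDerivAt (fun s => hardyEval g (φ (γ s)))
      (v * deriv φ (γ t) * deriv (hardyEval g) (φ (γ t))) t := by
  have hg := ((analyticOnNhd_hardyEval g _ hφγ).differentiableAt).hasDerivAt
  have hchain := hg.comp t (hφ.hasDerivAt.comp t hγ)
  rwa [mul_comm, mul_comm (deriv φ (γ t))] at hchain

lemma integral_hardyEval_eq_sub {f φ : ℂ → ℂ} (hφ : DifferentiableOn ℂ φ (ball 0 1))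
    {g u : H2} (hu : ∀ z ∈ ball (0 : ℂ) 1,
      hardyEval u z = f z * deriv φ z * deriv (hardyEval g) (φ z))
    {T : ℝ} (hT : 0 ≤ T) {γ : ℝ → ℂ}
    (hγmap : ∀ t ∈ Set.Icc (0 : ℝ) T, γ t ∈ ball (0 : ℂ) 1)
    (hφγmap : ∀ t ∈ Set.Icc (0 : ℝ) T, φ (γ t) ∈ ball (0 : ℂ) 1)
    (hγode : ∀ t ∈ Set.Icc (0 : ℝ) T, HasDerivAt γ (f (γ t)) t) :
    ∫ t in (0 : ℝ)..T, hardyEval u (γ t) = hardyEval g (φ (γ T)) - hardyEval g (φ (γ 0)) := by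
  rw [← Set.uIcc_of_le hT] at hγmap hφγmap hγode
  have hderiv : ∀ t ∈ Set.uIcc 0 T,
      HasDerivAt (fun s => hardyEval g (φ (γ s))) (hardyEval u (γ t)) t := fun t ht => by
    rw [hu _ (hγmap t ht)]
    exact hasDerivAt_hardyEval_comp g (hγode t ht)
      (hφ.differentiableAt (isOpen_ball.mem_nhds (hγmap t ht))) (hφγmap t ht)
  have hcont : ContinuousOn (fun t => hardyEval u (γ t)) (Set.uIcc 0 T) := fun t ht =>
    ((analyticOnNhd_hardyEval u _ (hγmap t ht)).continuousAt.comp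
      (hγode t ht).continuousAt).continuousWithinAt
  exact intervalIntegral.integral_eq_sub_of_hasDerivAt hderiv hcont.intervalIntegrable

theorem weighted_adjoint_on_occupation_kernel_general (f φ : ℂ → ℂ)
    (hφ : AnalyticOnNhd ℂ φ (ball (0 : ℂ) 1))
    (T : ℝ) (hT : 0 < T) (γ : ℝ → ℂ)
    (hγmap : ∀ t ∈ Set.Icc (0 : ℝ) T, γ t ∈ ball (0 : ℂ) 1)
    (hφγmap : ∀ t ∈ Set.Icc (0 : ℝ) T, φ (γ t) ∈ ball (0 : ℂ) 1)
    (hγode : ∀ t ∈ Set.Icc (0 : ℝ) T, HasDerivAt γ (f (γ t)) t)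
    (Γ : H2)
    (hΓ : ∀ g : H2, ∑' n : ℕ, g n * conj (Γ n) = ∫ t in (0 : ℝ)..T, hardyEval g (γ t)) :
    Memℓp (fun n : ℕ => (conj (φ (γ T))) ^ n - (conj (φ (γ 0))) ^ n) 2 ∧
    ∀ g u : H2,
      (∀ z ∈ ball (0 : ℂ) 1,
        hardyEval u z = f z * deriv φ z * deriv (hardyEval g) (φ z)) →
      ∑' n : ℕ, u n * conj (Γ n) =
      ∑' n : ℕ, g n * conj ((conj (φ (γ T))) ^ n - (conj (φ (γ 0))) ^ n) := by
  have hend : ‖φ (γ T)‖ < 1 := mem_ball_zero_iff.mp (hφγmap T ⟨hT.le, le_rfl⟩)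
  have hstart : ‖φ (γ 0)‖ < 1 := mem_ball_zero_iff.mp (hφγmap 0 ⟨le_rfl, hT.le⟩)
  refine ⟨(memℓp_two_pow (by simpa using hend)).sub (memℓp_two_pow (by simpa using hstart)),
    fun g u hu => ?_⟩
  rw [hΓ u, integral_hardyEval_eq_sub hφ.differentiableOn hu hT.le hγmap hφγmap hγode,
    hardyEval_sub_hardyEval_eq_tsum g hend hstart]

/-- For a densely defined Liouville weighted composition operator
`A_{f,φ} g = f·φ′·(g′∘φ)` and a trajectory `γ̇ = f(γ)` with `φ∘γ` staying in `𝔻`,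
the occupation kernel `Γ_γ` lies in the domain of `A_{f,φ}*` and
`A_{f,φ}* Γ_γ = K_{φ(γ(T))} − K_{φ(γ(0))}`. -/
theorem weighted_adjoint_on_occupation_kernel (f φ : ℂ → ℂ)
    (hf : AnalyticOnNhd ℂ f (ball (0 : ℂ) 1))
    (hφ : AnalyticOnNhd ℂ φ (ball (0 : ℂ) 1))
    (hdense : Dense {g : H2 | ∃ u : H2, ∀ z ∈ ball (0 : ℂ) 1,
      hardyEval u z = f z * deriv φ z * deriv (hardyEval g) (φ z)})
    (T : ℝ) (hT : 0 < T) (γ : ℝ → ℂ)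
    (hγmap : ∀ t ∈ Set.Icc (0 : ℝ) T, γ t ∈ ball (0 : ℂ) 1)
    (hφγmap : ∀ t ∈ Set.Icc (0 : ℝ) T, φ (γ t) ∈ ball (0 : ℂ) 1)
    (hγode : ∀ t ∈ Set.Icc (0 : ℝ) T, HasDerivAt γ (f (γ t)) t)
    (Γ : H2)
    (hΓ : ∀ g : H2, ∑' n : ℕ, g n * conj (Γ n) = ∫ t in (0 : ℝ)..T, hardyEval g (γ t)) :
    Memℓp (fun n : ℕ => (conj (φ (γ T))) ^ n - (conj (φ (γ 0))) ^ n) 2 ∧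
    ∀ g u : H2,
      (∀ z ∈ ball (0 : ℂ) 1,
        hardyEval u z = f z * deriv φ z * deriv (hardyEval g) (φ z)) →
      ∑' n : ℕ, u n * conj (Γ n) =
      ∑' n : ℕ, g n * conj ((conj (φ (γ T))) ^ n - (conj (φ (γ 0))) ^ n) :=
  weighted_adjoint_on_occupation_kernel_general f φ hφ T hT γ hγmap hφγmap hγode Γ hΓ
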